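/- Assume k_v + Γ > 0, let 0 < r_l < v_ref, λ ≥ λ_min(r_l), let P_l be a symmetric positive definite 2×2 real matrix and τ > 0 be such that Φ ≺ 0 and the 3×3 matrix [[P_l, Cᵀ], [C, r_l²]] is positive semidefinite. Then every solution (ε₁, ε₂, f) of the error system whose initial condition satisfies ε(0)ᵀP_lε(0) ≤ 1 remains in the set {ε : εᵀP_lε ≤ 1} for all t ≥ 0 and converges to the origin: (ε₁(t), ε₂(t)) → (0, 0) as t → ∞ (regional asymptotic stability with basin estimate 𝒟 = {ε : εᵀP_lε ≤ 1}). -/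

import Mathlib

open Matrix Real

/-- The friction nonlinearity `F_nl`. -/
noncomputable def Fnl (m g vs muC muS : ℝ) (v : ℝ) : ℝ :=
  m * g * (muC + (muS - muC) * Real.exp (-(v ^ 2) / vs ^ 2)) * Real.sign v

/-- The set-valued extension `𝔉` of the friction nonlinearity. -/
noncomputable def Ffric (m g vs muC muS : ℝ) (v : ℝ) : Set ℝ :=
  if v = 0 then Set.Icc (-(muS * m * g)) (muS * m * g) else {Fnl m g vs muC muS v}

/-- The shifted nonlinearity `φ(s) = F_nl(s + v_ref) − F_nl(v_ref)`. -/
noncomputable def phi (m g vs muC muS vref : ℝ) (s : ℝ) : ℝ :=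
  Fnl m g vs muC muS (s + vref) - Fnl m g vs muC muS vref

/-- `Γ = −2·m·g·(μ_S − μ_C)·(v_ref/v_s²)·exp(−v_ref²/v_s²)`. -/
noncomputable def Gam (m g vs muC muS vref : ℝ) : ℝ :=
  -2 * m * g * (muS - muC) * (vref / vs ^ 2) * Real.exp (-(vref ^ 2) / vs ^ 2)

/-- `λ_min(r) = sup{−φ(s)/s : s ∈ [−r, r], s ≠ 0}`. -/
noncomputable def lammin (m g vs muC muS vref : ℝ) (r : ℝ) : ℝ :=
  sSup {y : ℝ | ∃ s ∈ Set.Icc (-r) r, s ≠ 0 ∧ y = -phi m g vs muC muS vref s / s}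

/-- `M ≺ 0`: the quadratic form of `M` is negative definite. -/
def NegDef {n : Type*} [Fintype n] (M : Matrix n n ℝ) : Prop :=
  ∀ x : n → ℝ, x ≠ 0 → x ⬝ᵥ M.mulVec x < 0

/-- The dynamics matrix `A`. -/
noncomputable def Amat (m k kv : ℝ) : Matrix (Fin 2) (Fin 2) ℝ := !![-kv / m, -k / m; 1, 0]

/-- The linearized dynamics matrix `A₀`. -/
noncomputable def A0mat (m k kv Γ : ℝ) : Matrix (Fin 2) (Fin 2) ℝ :=
  !![-(kv + Γ) / m, -k / m; 1, 0]

/-- The input vector `B = (−1/m, 0)ᵀ`, as an element of `ℝ²`. -/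
noncomputable def Bvec (m : ℝ) : Fin 2 → ℝ := ![-1 / m, 0]

/-- The input matrix `B = (−1/m, 0)ᵀ`, as a `2×1` matrix. -/
noncomputable def Bmat (m : ℝ) : Matrix (Fin 2) (Fin 1) ℝ := !![-1 / m; 0]

/-- The row matrix `C = (1, 0)`. -/
def Cmat : Matrix (Fin 1) (Fin 2) ℝ := !![1, 0]

/-- The 3×3 matrix `Φ` of the regional stability LMI. -/
noncomputable def PhiMat (m k kv Γ lam τ : ℝ) (Pl : Matrix (Fin 2) (Fin 2) ℝ) :
    Matrix (Fin 2 ⊕ Fin 1) (Fin 2 ⊕ Fin 1) ℝ :=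
  Matrix.fromBlocks
    ((A0mat m k kv Γ)ᵀ * Pl + Pl * A0mat m k kv Γ - (2 * τ * Γ * (Γ + lam)) • (Cmatᵀ * Cmat))
    (Pl * Bmat m - (τ * (2 * Γ + lam)) • Cmatᵀ)
    ((Bmat m)ᵀ * Pl - (τ * (2 * Γ + lam)) • Cmat)
    !![-2 * τ]

open Filter Topology

/-!
Let `V = εᵀ P_l ε`. As long as `V ≤ 1`, the block condition gives `ε₁² ≤ r_l² V ≤ r_l²`, so
`ε₁ + v_ref > 0`: the friction is single-valued there and `φ(ε₁)` lies in the sector `[-λ, 0]`,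
because the Stribeck curve decreases on `(0, ∞)` and `λ ≥ λ_min(r_l)`. Splitting
`φ(ε₁) = Γ ε₁ + w`, the derivative of `V` is the form of `Φ` at `(ε, w)` plus
`2τ φ (φ + λ ε₁) ≤ 0`, hence `V̇ ≤ -δ |ε|² ≤ -c V`. A comparison argument then keeps `V` below
`exp (-c t / 2)`, which gives both the invariance of `{V ≤ 1}` and the convergence of `ε` to `0`.
-/

section QuadraticForm

variable {n : Type*} [Fintype n]

theorem Matrix.exists_dotProduct_mulVec_le_mul_norm_sq [Nonempty n] (M : Matrix n n ℝ) :
    ∃ u : n → ℝ, u ≠ 0 ∧ ∀ x, x ⬝ᵥ M *ᵥ x ≤ u ⬝ᵥ M *ᵥ u * ‖x‖ ^ 2 := by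
  have hq : Continuous fun x : n → ℝ => x ⬝ᵥ M *ᵥ x := by
    simp only [dotProduct, mulVec]; fun_prop
  obtain ⟨u, hu, hmax⟩ := (isCompact_sphere (0 : n → ℝ) 1).exists_isMaxOn
    (NormedSpace.sphere_nonempty.2 zero_le_one) hq.continuousOn
  have hu1 : ‖u‖ = 1 := by simpa using hu
  refine ⟨u, norm_ne_zero_iff.1 (by simp [hu1]), fun x => ?_⟩
  rcases eq_or_ne x 0 with rfl | hx
  · simp
  have hx' : ‖x‖ ≠ 0 := norm_ne_zero_iff.2 hx
  have key : (‖x‖⁻¹ • x) ⬝ᵥ M *ᵥ (‖x‖⁻¹ • x) ≤ u ⬝ᵥ M *ᵥ u :=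
    hmax (by simp [norm_smul, hx'])
  rw [mulVec_smul, smul_dotProduct, dotProduct_smul, smul_eq_mul, smul_eq_mul] at key
  calc x ⬝ᵥ M *ᵥ x = ‖x‖⁻¹ * (‖x‖⁻¹ * x ⬝ᵥ M *ᵥ x) * ‖x‖ ^ 2 := by field_simp
    _ ≤ u ⬝ᵥ M *ᵥ u * ‖x‖ ^ 2 := by gcongr

theorem NegDef.exists_le_neg_mul_norm_sq [Nonempty n] {M : Matrix n n ℝ} (hM : NegDef M) :
    ∃ δ > 0, ∀ x, x ⬝ᵥ M *ᵥ x ≤ -δ * ‖x‖ ^ 2 := by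
  obtain ⟨u, hu, hle⟩ := M.exists_dotProduct_mulVec_le_mul_norm_sq
  exact ⟨-(u ⬝ᵥ M *ᵥ u), neg_pos.2 (hM u hu), by simpa using hle⟩

theorem Matrix.PosDef.exists_le_mul_norm_sq [Nonempty n] {P : Matrix n n ℝ} (hP : P.PosDef) :
    ∃ β > 0, ∀ x, x ⬝ᵥ P *ᵥ x ≤ β * ‖x‖ ^ 2 := by
  obtain ⟨u, hu, hle⟩ := P.exists_dotProduct_mulVec_le_mul_norm_sq
  exact ⟨u ⬝ᵥ P *ᵥ u, by simpa using hP.dotProduct_mulVec_pos hu, hle⟩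

theorem Matrix.PosDef.exists_mul_norm_sq_le [Nonempty n] {P : Matrix n n ℝ} (hP : P.PosDef) :
    ∃ α > 0, ∀ x, α * ‖x‖ ^ 2 ≤ x ⬝ᵥ P *ᵥ x := by
  have hneg : NegDef (-P) := fun x hx => by
    simpa [neg_mulVec] using hP.dotProduct_mulVec_pos hx
  obtain ⟨α, hα, hle⟩ := hneg.exists_le_neg_mul_norm_sq
  exact ⟨α, hα, fun x => by simpa [neg_mulVec] using hle x⟩

theorem HasDerivAt.dotProduct_mulVec (M : Matrix n n ℝ) {x : ℝ → n → ℝ} {x' : n → ℝ} {t : ℝ}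
    (hx : HasDerivAt x x' t) :
    HasDerivAt (fun t => x t ⬝ᵥ M *ᵥ x t) (x' ⬝ᵥ M *ᵥ x t + x t ⬝ᵥ M *ᵥ x') t := by
  have hxi : ∀ i, HasDerivAt (fun t => x t i) (x' i) t := hasDerivAt_pi.1 hx
  have hMx : ∀ i, HasDerivAt (fun t => (M *ᵥ x t) i) ((M *ᵥ x') i) t := fun i =>
    HasDerivAt.fun_sum fun j _ => (hxi j).const_mul (M i j)
  simpa only [dotProduct, Finset.sum_add_distrib] using
    HasDerivAt.fun_sum (u := Finset.univ) fun i _ => (hxi i).fun_mul (hMx i)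

theorem Matrix.PosSemidef.sq_le_of_fromBlocks {P : Matrix n n ℝ} {C : Matrix (Fin 1) n ℝ}
    {r : ℝ} (hr : 0 < r) (h : (fromBlocks P Cᵀ C !![r]).PosSemidef) (x : n → ℝ) :
    (C *ᵥ x) 0 ^ 2 ≤ r * (x ⬝ᵥ P *ᵥ x) := by
  have := h.dotProduct_mulVec_nonneg (Sum.elim (r • x) ![-(C *ᵥ x) 0])
  simp only [fromBlocks_mulVec, Sum.elim_comp_inl, Sum.elim_comp_inr, sumElim_dotProduct_sumElim,
    dotProduct_add, mulVec_smul, smul_dotProduct, dotProduct_smul, dotProduct_mulVec _ Cᵀ,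
    vecMul_transpose, smul_eq_mul, star_trivial] at this
  simp [dotProduct, vecHead] at this ⊢
  nlinarith

end QuadraticForm

theorem Real.abs_exp_sub_exp_le_of_nonpos {a b : ℝ} (ha : a ≤ 0) (hb : b ≤ 0) :
    |exp a - exp b| ≤ |a - b| := by
  wlog hba : b ≤ a generalizing a b
  · rw [abs_sub_comm, abs_sub_comm a]
    exact this hb ha (le_of_not_ge hba)
  have hexp : exp a * (b - a + 1) ≤ exp b := by
    simpa [← exp_add] using mul_le_mul_of_nonneg_left (add_one_le_exp (b - a)) (exp_pos a).le
  rw [abs_of_nonneg (sub_nonneg.2 (exp_le_exp.2 hba)), abs_of_nonneg (sub_nonneg.2 hba)]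
  nlinarith [mul_le_mul_of_nonneg_right (exp_le_one_iff.2 ha) (sub_nonneg.2 hba)]

section Friction

variable {m g vs muC muS vref r lam s : ℝ}

theorem Fnl_of_pos {v : ℝ} (hv : 0 < v) :
    Fnl m g vs muC muS v = m * g * (muC + (muS - muC) * exp (-(v ^ 2) / vs ^ 2)) := by
  rw [Fnl, Real.sign_of_pos hv, mul_one]

theorem Fnl_antitoneOn (hmg : 0 ≤ m * g * (muS - muC)) :
    AntitoneOn (Fnl m g vs muC muS) (Set.Ioi 0) := by
  intro a ha b hb hab
  have hexp : exp (-(b ^ 2) / vs ^ 2) ≤ exp (-(a ^ 2) / vs ^ 2) :=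
    exp_le_exp.2 (div_le_div_of_nonneg_right (neg_le_neg (pow_le_pow_left₀ ha.le hab 2))
      (sq_nonneg vs))
  rw [Fnl_of_pos ha, Fnl_of_pos hb]
  linear_combination mul_le_mul_of_nonneg_left hexp hmg

theorem mul_phi_nonpos (hmg : 0 ≤ m * g * (muS - muC)) (hvref : 0 < vref) (hs : 0 < s + vref) :
    s * phi m g vs muC muS vref s ≤ 0 := by
  rcases le_total s 0 with hs0 | hs0
  · refine mul_nonpos_of_nonpos_of_nonneg hs0 (sub_nonneg.2 ?_)
    exact Fnl_antitoneOn hmg hs hvref (by linarith)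
  · refine mul_nonpos_of_nonneg_of_nonpos hs0 (sub_nonpos.2 ?_)
    exact Fnl_antitoneOn hmg hvref hs (by linarith)

theorem abs_phi_le (hmg : 0 ≤ m * g * (muS - muC)) (hr : r < vref) (hs : s ∈ Set.Icc (-r) r) :
    |phi m g vs muC muS vref s| ≤ m * g * (muS - muC) * ((r + 2 * vref) / vs ^ 2) * |s| := by
  obtain ⟨hs₁, hs₂⟩ := hs
  have hexp := Real.abs_exp_sub_exp_le_of_nonpos (a := -((s + vref) ^ 2) / vs ^ 2)
    (b := -(vref ^ 2) / vs ^ 2) (by rw [neg_div]; exact neg_nonpos.2 (by positivity))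
    (by rw [neg_div]; exact neg_nonpos.2 (by positivity))
  have hdiff : |-((s + vref) ^ 2) / vs ^ 2 - -(vref ^ 2) / vs ^ 2|
      = (s + 2 * vref) / vs ^ 2 * |s| := by
    rw [← sub_div, abs_div, abs_of_nonneg (sq_nonneg vs),
      show -((s + vref) ^ 2) - -(vref ^ 2) = -(s * (s + 2 * vref)) by ring,
      abs_neg, abs_mul, abs_of_pos (by linarith : 0 < s + 2 * vref)]
    ring
  have hphi : phi m g vs muC muS vref s = m * g * (muS - muC)
      * (exp (-((s + vref) ^ 2) / vs ^ 2) - exp (-(vref ^ 2) / vs ^ 2)) := by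
    rw [phi, Fnl_of_pos (by linarith : 0 < s + vref), Fnl_of_pos (by linarith : 0 < vref)]
    ring
  rw [hphi, abs_mul, abs_of_nonneg hmg, mul_assoc (m * g * (muS - muC))]
  refine mul_le_mul_of_nonneg_left (hexp.trans (hdiff.trans_le ?_)) hmg
  gcongr

theorem bddAbove_lammin_set (hmg : 0 ≤ m * g * (muS - muC)) (hr : r < vref) :
    BddAbove {y : ℝ | ∃ s ∈ Set.Icc (-r) r, s ≠ 0 ∧ y = -phi m g vs muC muS vref s / s} := by
  refine ⟨m * g * (muS - muC) * ((r + 2 * vref) / vs ^ 2), ?_⟩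
  rintro _ ⟨s, hs, hs0, rfl⟩
  calc -phi m g vs muC muS vref s / s ≤ |phi m g vs muC muS vref s| / |s| := by
        rw [← abs_div, ← abs_neg, neg_div]; exact le_abs_self _
    _ ≤ _ := (div_le_iff₀ (abs_pos.2 hs0)).2 (abs_phi_le hmg hr hs)

theorem phi_mul_phi_add_mul_nonpos (hmg : 0 ≤ m * g * (muS - muC)) (hr : r < vref)
    (hlam : lammin m g vs muC muS vref r ≤ lam) (hs : s ∈ Set.Icc (-r) r) :
    phi m g vs muC muS vref s * (phi m g vs muC muS vref s + lam * s) ≤ 0 := by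
  rcases eq_or_ne s 0 with rfl | hs0
  · simp [phi]
  set p := phi m g vs muC muS vref s
  have hslope : -p / s ≤ lam :=
    (le_csSup (bddAbove_lammin_set hmg hr) ⟨s, hs, hs0, rfl⟩).trans hlam
  have hdecr : s * p ≤ 0 := mul_phi_nonpos hmg (by linarith [hs.1, hs.2]) (by linarith [hs.1])
  have hsector : 0 ≤ s * (p + lam * s) := by
    rw [show s * (p + lam * s) = s ^ 2 * (lam - -p / s) by field_simp; ring]
    exact mul_nonneg (sq_nonneg s) (sub_nonneg.2 hslope)
  refine nonpos_of_mul_nonpos_left ?_ (by positivity : 0 < s ^ 2)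
  nlinarith [mul_nonpos_of_nonpos_of_nonneg hdecr hsector]

theorem sub_Fnl_mul_add_nonpos_of_mem_Ffric (hmg : 0 ≤ m * g * (muS - muC)) (hr : r < vref)
    (hlam : lammin m g vs muC muS vref r ≤ lam) (hs : |s| ≤ r) {f : ℝ}
    (hf : f ∈ Ffric m g vs muC muS (s + vref)) :
    (f - Fnl m g vs muC muS vref) * (f - Fnl m g vs muC muS vref + lam * s) ≤ 0 := by
  rw [Ffric, if_neg (by linarith [neg_abs_le s] : s + vref ≠ 0), Set.mem_singleton_iff] at hf
  subst hf
  exact phi_mul_phi_add_mul_nonpos hmg hr hlam (abs_le.1 hs)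

end Friction

/- Comparing with `exp (-(c / 2 * t))` rather than `exp (-(c * t))` makes the derivative
inequality at a contact point strict, as the comparison principle requires. -/
theorem le_exp_of_hasDerivAt_le_neg_mul {V V' : ℝ → ℝ} {c : ℝ} (hc : 0 < c)
    (hV : ∀ t, 0 ≤ t → HasDerivAt V (V' t) t) (h0 : V 0 ≤ 1)
    (hV' : ∀ t, 0 ≤ t → V t ≤ 1 → V' t ≤ -c * V t) {t : ℝ} (ht : 0 ≤ t) :
    V t ≤ exp (-(c / 2 * t)) := by
  have hB : ∀ s, HasDerivAt (fun s => exp (-(c / 2 * s))) (exp (-(c / 2 * s)) * -(c / 2)) s :=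
    fun s => by simpa using ((hasDerivAt_id s).const_mul (c / 2)).neg.exp
  refine image_le_of_deriv_right_lt_deriv_boundary
    (fun s hs => (hV s hs.1).continuousAt.continuousWithinAt)
    (fun s hs => (hV s hs.1).hasDerivWithinAt) (by simpa using h0) hB ?_ ⟨ht, le_rfl⟩
  intro s hs hVs
  have hB1 : exp (-(c / 2 * s)) ≤ 1 := exp_le_one_iff.2 (by nlinarith [hs.1])
  calc V' s ≤ -c * exp (-(c / 2 * s)) := hVs ▸ hV' s hs.1 (hVs ▸ hB1)
    _ < exp (-(c / 2 * s)) * -(c / 2) := by nlinarith [exp_pos (-(c / 2 * s))]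

theorem tendsto_nhds_zero_of_mul_norm_sq_le {E : Type*} [SeminormedAddCommGroup E] {x : ℝ → E}
    {y : ℝ → ℝ} {α : ℝ} (hα : 0 < α) (hy : Tendsto y atTop (𝓝 0))
    (h : ∀ᶠ t in atTop, α * ‖x t‖ ^ 2 ≤ y t) : Tendsto x atTop (𝓝 0) := by
  refine squeeze_zero_norm' ?_ (by simpa using (hy.div_const α).sqrt)
  filter_upwards [h] with t ht
  exact Real.le_sqrt_of_sq_le ((le_div_iff₀' hα).2 ht)

/-- The right-hand side of the error system, `p` standing for the friction deviation
`f − F_nl(v_ref)`. -/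
noncomputable def errorField (m k kv p : ℝ) (x : Fin 2 → ℝ) : Fin 2 → ℝ :=
  ![-(1 / m) * p - (kv / m) * x 0 - (k / m) * x 1, x 0]

section ErrorSystem

variable {m k kv Γ lam τ δ p : ℝ} {Pl : Matrix (Fin 2) (Fin 2) ℝ}

/- The S-procedure: with `w = p - Γ * x 0` the deviation of the friction from its linearization
at `v_ref`, the derivative of `xᵀ P x` is the form of `Φ` at `(x, w)` plus the sector term. -/
theorem errorField_dotProduct_eq (hPl : Pl.IsHermitian) (x : Fin 2 → ℝ) :
    errorField m k kv p x ⬝ᵥ Pl *ᵥ x + x ⬝ᵥ Pl *ᵥ errorField m k kv p x =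
      Sum.elim x ![p - Γ * x 0] ⬝ᵥ PhiMat m k kv Γ lam τ Pl *ᵥ Sum.elim x ![p - Γ * x 0]
        + 2 * τ * p * (p + lam * x 0) := by
  have hsym : Pl 1 0 = Pl 0 1 := by simpa using hPl.apply 0 1
  simp [errorField, PhiMat, A0mat, Bmat, Cmat, dotProduct, mulVec, fromBlocks,
    Fintype.sum_sum_type, Fin.sum_univ_two, Matrix.mul_apply, hsym]
  ring

theorem errorField_dotProduct_le (hPl : Pl.IsHermitian) (hτ : 0 ≤ τ) (hδ : 0 ≤ δ)
    (hPhi : ∀ z, z ⬝ᵥ PhiMat m k kv Γ lam τ Pl *ᵥ z ≤ -δ * ‖z‖ ^ 2) {x : Fin 2 → ℝ}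
    (hp : p * (p + lam * x 0) ≤ 0) :
    errorField m k kv p x ⬝ᵥ Pl *ᵥ x + x ⬝ᵥ Pl *ᵥ errorField m k kv p x ≤ -δ * ‖x‖ ^ 2 := by
  set z := Sum.elim x ![p - Γ * x 0]
  have hxz : ‖x‖ ≤ ‖z‖ :=
    (pi_norm_le_iff_of_nonneg (norm_nonneg z)).2 fun i => norm_le_pi_norm z (Sum.inl i)
  rw [errorField_dotProduct_eq (Γ := Γ) (lam := lam) (τ := τ) hPl]
  nlinarith [hPhi z, mul_le_mul_of_nonneg_left (pow_le_pow_left₀ (norm_nonneg x) hxz 2) hδ,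
    mul_nonpos_of_nonneg_of_nonpos hτ hp]

end ErrorSystem

theorem errorField_dotProduct_le_of_le_one {m g vs k kv muC muS vref rl lam τ δ : ℝ}
    {Pl : Matrix (Fin 2) (Fin 2) ℝ} (hmg : 0 ≤ m * g * (muS - muC)) (hrl : 0 < rl)
    (hrlv : rl < vref) (hlam : lammin m g vs muC muS vref rl ≤ lam) (hPl : Pl.IsHermitian)
    (hτ : 0 ≤ τ) (hδ : 0 ≤ δ)
    (hPhi : ∀ z, z ⬝ᵥ PhiMat m k kv (Gam m g vs muC muS vref) lam τ Pl *ᵥ z ≤ -δ * ‖z‖ ^ 2)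
    (hblock : (fromBlocks Pl Cmatᵀ Cmat !![rl ^ 2]).PosSemidef)
    {x : Fin 2 → ℝ} (hx : x ⬝ᵥ Pl *ᵥ x ≤ 1) {f : ℝ} (hf : f ∈ Ffric m g vs muC muS (x 0 + vref)) :
    errorField m k kv (f - Fnl m g vs muC muS vref) x ⬝ᵥ Pl *ᵥ x
      + x ⬝ᵥ Pl *ᵥ errorField m k kv (f - Fnl m g vs muC muS vref) x ≤ -δ * ‖x‖ ^ 2 := by
  have hx0 : x 0 ^ 2 ≤ rl ^ 2 := by
    have hC : (Cmat *ᵥ x) 0 = x 0 := by simp [Cmat, mulVec, dotProduct]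
    have := hblock.sq_le_of_fromBlocks (by positivity) x
    rw [hC] at this
    nlinarith [mul_le_mul_of_nonneg_left hx (sq_nonneg rl)]
  exact errorField_dotProduct_le hPl hτ hδ hPhi
    (sub_Fnl_mul_add_nonpos_of_mem_Ffric hmg hrlv hlam (abs_le_of_sq_le_sq hx0 hrl.le) hf)

theorem stmt17_general (m g vs k kv muC muS vref : ℝ)
    (hm : 0 < m) (hg : 0 < g)
    (hmu : muC < muS)
    (rl : ℝ) (hrl : 0 < rl) (hrlv : rl < vref)
    (lam : ℝ) (hlam : lammin m g vs muC muS vref rl ≤ lam)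
    (Pl : Matrix (Fin 2) (Fin 2) ℝ) (hPl : Pl.PosDef)
    (τ : ℝ) (hτ : 0 < τ)
    (hPhi : NegDef (PhiMat m k kv (Gam m g vs muC muS vref) lam τ Pl))
    (hblock : (Matrix.fromBlocks Pl Cmatᵀ Cmat !![rl ^ 2]).PosSemidef)
    -- a solution (ε₁, ε₂, f) of the error system:
    (ε1 ε2 f : ℝ → ℝ)
    (hsol : ∀ t : ℝ, 0 ≤ t →
      f t ∈ Ffric m g vs muC muS (ε1 t + vref) ∧
      HasDerivAt ε1
        (-(1 / m) * (f t - Fnl m g vs muC muS vref) - (kv / m) * ε1 t - (k / m) * ε2 t) t ∧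
      HasDerivAt ε2 (ε1 t) t)
    -- whose initial condition lies in the estimated basin of attraction:
    (hinit : ![ε1 0, ε2 0] ⬝ᵥ Pl.mulVec ![ε1 0, ε2 0] ≤ 1) :
    (∀ t : ℝ, 0 ≤ t → ![ε1 t, ε2 t] ⬝ᵥ Pl.mulVec ![ε1 t, ε2 t] ≤ 1) ∧
    Filter.Tendsto (fun t => (ε1 t, ε2 t)) Filter.atTop (nhds (0, 0)) := by
  have hmg : 0 ≤ m * g * (muS - muC) := by have := sub_pos.2 hmu; positivity
  obtain ⟨δ, hδ, hδPhi⟩ := hPhi.exists_le_neg_mul_norm_sq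
  obtain ⟨α, hα, hαPl⟩ := hPl.exists_mul_norm_sq_le
  obtain ⟨β, hβ, hβPl⟩ := hPl.exists_le_mul_norm_sq
  set x : ℝ → Fin 2 → ℝ := fun t => ![ε1 t, ε2 t]
  have hV (t : ℝ) (ht : 0 ≤ t) := HasDerivAt.dotProduct_mulVec Pl
    (hasDerivAt_pi.2 (Fin.forall_fin_two.2 ⟨(hsol t ht).2.1, (hsol t ht).2.2⟩) :
      HasDerivAt x (errorField m k kv (f t - Fnl m g vs muC muS vref) (x t)) t)
  have hdecay (t : ℝ) (ht : 0 ≤ t) : x t ⬝ᵥ Pl *ᵥ x t ≤ exp (-(δ / β / 2 * t)) := by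
    refine le_exp_of_hasDerivAt_le_neg_mul (div_pos hδ hβ) hV hinit (fun t ht hV1 => ?_) ht
    calc _ ≤ -δ * ‖x t‖ ^ 2 := errorField_dotProduct_le_of_le_one hmg hrl hrlv hlam hPl.isHermitian
          hτ.le hδ.le hδPhi hblock hV1 (hsol t ht).1
      _ ≤ -(δ / β) * (x t ⬝ᵥ Pl *ᵥ x t) := by
          rw [neg_mul, neg_mul, neg_le_neg_iff, div_mul_eq_mul_div, div_le_iff₀ hβ]
          nlinarith [hβPl (x t)]
  refine ⟨fun t ht => (hdecay t ht).trans (exp_le_one_iff.2 ?_), ?_⟩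
  · exact neg_nonpos.2 (mul_nonneg (by positivity) ht)
  have hx : Tendsto x atTop (𝓝 0) := tendsto_nhds_zero_of_mul_norm_sq_le hα
    (tendsto_exp_neg_atTop_nhds_zero.comp (tendsto_id.const_mul_atTop (by positivity)))
    ((eventually_ge_atTop 0).mono fun t ht => (hαPl (x t)).trans (hdecay t ht))
  exact (((continuous_apply 0).prodMk (continuous_apply 1)).tendsto' 0 (0, 0) rfl).comp hx

theorem stmt17 (m g vs k kv muC muS vref : ℝ)
    (hm : 0 < m) (hg : 0 < g) (hvs : 0 < vs) (hk : 0 < k) (hkv : 0 < kv)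
    (hmuC : 0 < muC) (hmu : muC < muS) (hvref : 0 < vref)
    (hHurwitz : 0 < kv + Gam m g vs muC muS vref)
    (rl : ℝ) (hrl : 0 < rl) (hrlv : rl < vref)
    (lam : ℝ) (hlam : lammin m g vs muC muS vref rl ≤ lam)
    (Pl : Matrix (Fin 2) (Fin 2) ℝ) (hPl : Pl.PosDef)
    (τ : ℝ) (hτ : 0 < τ)
    (hPhi : NegDef (PhiMat m k kv (Gam m g vs muC muS vref) lam τ Pl))
    (hblock : (Matrix.fromBlocks Pl Cmatᵀ Cmat !![rl ^ 2]).PosSemidef)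
    -- a solution (ε₁, ε₂, f) of the error system:
    (ε1 ε2 f : ℝ → ℝ)
    (hsol : ∀ t : ℝ, 0 ≤ t →
      f t ∈ Ffric m g vs muC muS (ε1 t + vref) ∧
      HasDerivAt ε1
        (-(1 / m) * (f t - Fnl m g vs muC muS vref) - (kv / m) * ε1 t - (k / m) * ε2 t) t ∧
      HasDerivAt ε2 (ε1 t) t)
    -- whose initial condition lies in the estimated basin of attraction:
    (hinit : ![ε1 0, ε2 0] ⬝ᵥ Pl.mulVec ![ε1 0, ε2 0] ≤ 1) :
    (∀ t : ℝ, 0 ≤ t → ![ε1 t, ε2 t] ⬝ᵥ Pl.mulVec ![ε1 t, ε2 t] ≤ 1) ∧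
    Filter.Tendsto (fun t => (ε1 t, ε2 t)) Filter.atTop (nhds (0, 0)) :=
  stmt17_general m g vs k kv muC muS vref hm hg hmu rl hrl hrlv lam hlam Pl hPl τ hτ hPhi hblock ε1
    ε2 f hsol hinit
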